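/- Let A be an n×n real matrix (n ≥ 2) that is irreducible, entrywise nonnegative, symmetric and positive semidefinite, and let x ∈ ℝ^n have all entries positive. Let i_1 be a log-concavity index and i_2 a log-convexity index of A associated with x, and set g_k = (A^k x)_{i_1} and h_k = (A^k x)_{i_2} for k ≥ 0. Assume that every entry of the i_1-th row of A and every entry of the i_2-th row of A is positive, and that A^r x is not a Perron vector of A for any integer r ≥ 0. Then: (i) there exists k_1 ≥ 1 such that (a_k(A,x))_{k≥k_1} is strictly decreasing and g_{k−1} g_{k+1} < g_k² for all k ≥ k_1; (ii) there exists k_2 ≥ 1 such that (b_k(A,x))_{k≥k_2} is strictly increasing and h_{k−1} h_{k+1} > h_k² for all k ≥ k_2. -/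

import Mathlib

open Matrix

/-- A square matrix is irreducible if no permutation similarity puts it in block
upper triangular form; equivalently, for every nonempty proper subset `S` of indices
there are `i ∈ S` and `j ∉ S` with `A i j ≠ 0`. -/
def IsIrreducibleMatrix {n : ℕ} (A : Matrix (Fin n) (Fin n) ℝ) : Prop :=
  ∀ S : Finset (Fin n), S.Nonempty → S ≠ Finset.univ → ∃ i ∈ S, ∃ j, j ∉ S ∧ A i j ≠ 0

/-- The Perron value (spectral radius) of a real square matrix: the supremum of the
absolute values of its complex eigenvalues (roots of the characteristic polynomial). -/
noncomputable def perronValue {n : ℕ} (A : Matrix (Fin n) (Fin n) ℝ) : ℝ :=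
  sSup {r : ℝ | ∃ μ : ℂ, ((A.map Complex.ofReal).charpoly).IsRoot μ ∧ r = ‖μ‖}

/-- A Perron vector of `A`: an eigenvector associated with the Perron value of `A`. -/
def IsPerronVector {n : ℕ} (A : Matrix (Fin n) (Fin n) ℝ) (x : Fin n → ℝ) : Prop :=
  x ≠ 0 ∧ A.mulVec x = perronValue A • x

/-- `a_k(A,x) = max_i (A^k x)_i / (A^{k-1} x)_i` for `k ≥ 1`. -/
noncomputable def aSeq {n : ℕ} (A : Matrix (Fin n) (Fin n) ℝ) (x : Fin n → ℝ) (k : ℕ) : ℝ :=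
  ⨆ i, ((A ^ k).mulVec x i) / ((A ^ (k - 1)).mulVec x i)

/-- `b_k(A,x) = min_i (A^k x)_i / (A^{k-1} x)_i` for `k ≥ 1`. -/
noncomputable def bSeq {n : ℕ} (A : Matrix (Fin n) (Fin n) ℝ) (x : Fin n → ℝ) (k : ℕ) : ℝ :=
  ⨅ i, ((A ^ k).mulVec x i) / ((A ^ (k - 1)).mulVec x i)

/-- `i₀` is a log-concavity index of `A` associated with `x`: for all sufficiently large `k`,
the ratio `(A^k x)_{i₀} / (A^{k-1} x)_{i₀}` attains the maximum over all indices. -/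
def IsLogConcavityIndex {n : ℕ} (A : Matrix (Fin n) (Fin n) ℝ) (x : Fin n → ℝ)
    (i₀ : Fin n) : Prop :=
  ∃ K : ℕ, 0 < K ∧ ∀ k : ℕ, K ≤ k →
    ((A ^ k).mulVec x i₀) / ((A ^ (k - 1)).mulVec x i₀)
      = ⨆ i, ((A ^ k).mulVec x i) / ((A ^ (k - 1)).mulVec x i)

/-- `i₀` is a log-convexity index of `A` associated with `x`: for all sufficiently large `k`,
the ratio `(A^k x)_{i₀} / (A^{k-1} x)_{i₀}` attains the minimum over all indices. -/
def IsLogConvexityIndex {n : ℕ} (A : Matrix (Fin n) (Fin n) ℝ) (x : Fin n → ℝ)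
    (i₀ : Fin n) : Prop :=
  ∃ K : ℕ, 0 < K ∧ ∀ k : ℕ, K ≤ k →
    ((A ^ k).mulVec x i₀) / ((A ^ (k - 1)).mulVec x i₀)
      = ⨅ i, ((A ^ k).mulVec x i) / ((A ^ (k - 1)).mulVec x i)

/-!
If `i₁` attains the maximal ratio `a_k`, then `A^k x ≤ a_k • A^(k-1) x` entrywise, and the
inequality is strict somewhere: otherwise the positive vector `A^(k-1) x` would be an eigenvector
of the nonnegative matrix `A`, hence a Perron vector. Applying `A` and reading off the strictly
positive row `i₁` gives `(A^(k+1) x)_{i₁} < a_k (A^k x)_{i₁}`, i.e. `a_{k+1} < a_k`, which is also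
the strict log-concavity of `g`. The minimum `b_k` and the row `i₂` are symmetric.
-/

namespace Matrix

variable {ι : Type*} [Fintype ι]

lemma isRoot_charpoly_iff_exists_mulVec_eq_smul [DecidableEq ι] {K : Type*} [Field K]
    (M : Matrix ι ι K) (μ : K) :
    M.charpoly.IsRoot μ ↔ ∃ w : ι → K, w ≠ 0 ∧ M *ᵥ w = μ • w := by
  rw [← mem_spectrum_iff_isRoot_charpoly, ← spectrum_toLin',
    ← Module.End.hasEigenvalue_iff_mem_spectrum]
  constructor
  · intro h
    obtain ⟨w, hw⟩ := h.exists_hasEigenvector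
    exact ⟨w, hw.2, hw.apply_eq_smul⟩
  · rintro ⟨w, hw0, hw⟩
    exact Module.End.hasEigenvalue_of_hasEigenvector ⟨Module.End.mem_eigenspace_iff.mpr hw, hw0⟩

lemma mulVec_apply_lt_mulVec_apply {A : Matrix ι ι ℝ} {i : ι} (hrow : ∀ j, 0 < A i j)
    {u v : ι → ℝ} (huv : u < v) : (A *ᵥ u) i < (A *ᵥ v) i := by
  obtain ⟨hle, j, hj⟩ := Pi.lt_def.mp huv
  exact Finset.sum_lt_sum (fun j _ => mul_le_mul_of_nonneg_left (hle j) (hrow j).le)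
    ⟨j, Finset.mem_univ j, mul_lt_mul_of_pos_left hj (hrow j)⟩

lemma mulVec_apply_pos {A : Matrix ι ι ℝ} {i : ι} (hrow : ∀ j, 0 < A i j) {y : ι → ℝ}
    (hy : ∀ j, 0 < y j) : 0 < (A *ᵥ y) i := by
  simpa using mulVec_apply_lt_mulVec_apply (u := 0) hrow
    (Pi.lt_def.mpr ⟨fun j => (hy j).le, i, hy i⟩)

lemma mulVec_pos_of_exists_ne_zero {A : Matrix ι ι ℝ} (hA : ∀ i j, 0 ≤ A i j)
    (hrows : ∀ i, ∃ j, A i j ≠ 0) {y : ι → ℝ} (hy : ∀ j, 0 < y j) (i : ι) :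
    0 < (A *ᵥ y) i := by
  obtain ⟨j, hj⟩ := hrows i
  exact Finset.sum_pos' (fun j _ => mul_nonneg (hA i j) (hy j).le)
    ⟨j, Finset.mem_univ j, mul_pos ((hA i j).lt_of_ne' hj) (hy j)⟩

/-- Collatz–Wielandt: compare `|w|` with `v` at the index where `|w_i| / v_i` is largest. -/
lemma norm_le_of_mulVec_eq_smul {A : Matrix ι ι ℝ} (hA : ∀ i j, 0 ≤ A i j) {v : ι → ℝ}
    (hv : ∀ i, 0 < v i) {t : ℝ} (hAv : A *ᵥ v = t • v) {μ : ℂ} {w : ι → ℂ} (hw0 : w ≠ 0)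
    (hAw : A.map Complex.ofReal *ᵥ w = μ • w) : ‖μ‖ ≤ t := by
  obtain ⟨j, hj⟩ := Function.ne_iff.mp hw0
  have : Nonempty ι := ⟨j⟩
  obtain ⟨i, hi⟩ := Finite.exists_max fun k => ‖w k‖ / v k
  set c := ‖w i‖ / v i
  have hwi : 0 < ‖w i‖ :=
    (div_pos_iff_of_pos_right (hv i)).mp ((div_pos (norm_pos_iff.mpr hj) (hv j)).trans_le (hi j))
  have hdom : ∀ k, ‖w k‖ ≤ c * v k := fun k => (div_le_iff₀ (hv k)).mp (hi k)
  have key : ‖μ‖ * ‖w i‖ ≤ t * ‖w i‖ :=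
    calc ‖μ‖ * ‖w i‖ = ‖∑ k, (A i k : ℂ) * w k‖ := by
          rw [← norm_mul, ← smul_eq_mul, ← Pi.smul_apply, ← hAw]; rfl
      _ ≤ ∑ k, A i k * (c * v k) := by
          refine (norm_sum_le _ _).trans (Finset.sum_le_sum fun k _ => ?_)
          rw [norm_mul, Complex.norm_real, Real.norm_of_nonneg (hA i k)]
          exact mul_le_mul_of_nonneg_left (hdom k) (hA i k)
      _ = c * (A *ᵥ v) i := by
          simp only [mulVec, dotProduct, Finset.mul_sum]
          exact Finset.sum_congr rfl fun k _ => by ring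
      _ = t * ‖w i‖ := by
          rw [hAv, Pi.smul_apply, smul_eq_mul, mul_left_comm]
          simp only [c, div_mul_cancel₀ _ (hv i).ne']
  exact le_of_mul_le_mul_right key hwi

lemma pow_succ_mulVec [DecidableEq ι] (A : Matrix ι ι ℝ) (k : ℕ) (x : ι → ℝ) :
    A ^ (k + 1) *ᵥ x = A *ᵥ (A ^ k *ᵥ x) := by
  rw [mulVec_mulVec, pow_succ']

lemma pow_mulVec_pos_of_exists_ne_zero [DecidableEq ι] {A : Matrix ι ι ℝ}
    (hA : ∀ i j, 0 ≤ A i j) (hrows : ∀ i, ∃ j, A i j ≠ 0) {x : ι → ℝ} (hx : ∀ j, 0 < x j)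
    (k : ℕ) (i : ι) : 0 < (A ^ k *ᵥ x) i := by
  induction k generalizing i with
  | zero => simpa using hx i
  | succ k ih =>
    rw [pow_succ_mulVec]
    exact mulVec_pos_of_exists_ne_zero hA hrows ih i

lemma mulVec_apply_div_lt_iSup {A : Matrix ι ι ℝ} {i : ι} (hrow : ∀ j, 0 < A i j) {y : ι → ℝ}
    (hy : ∀ j, 0 < y j) (hne : ∀ c : ℝ, A *ᵥ y ≠ c • y) :
    (A *ᵥ (A *ᵥ y)) i / (A *ᵥ y) i < ⨆ j, (A *ᵥ y) j / y j := by
  set c := ⨆ j, (A *ᵥ y) j / y j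
  have hle : A *ᵥ y ≤ c • y := fun j => (div_le_iff₀ (hy j)).mp
    (le_ciSup (f := fun j => (A *ᵥ y) j / y j) (Finite.bddAbove_range _) j)
  rw [div_lt_iff₀ (mulVec_apply_pos hrow hy), ← smul_eq_mul, ← Pi.smul_apply, ← mulVec_smul]
  exact mulVec_apply_lt_mulVec_apply hrow (lt_of_le_of_ne hle (hne c))

lemma iInf_lt_mulVec_apply_div {A : Matrix ι ι ℝ} {i : ι} (hrow : ∀ j, 0 < A i j) {y : ι → ℝ}
    (hy : ∀ j, 0 < y j) (hne : ∀ c : ℝ, A *ᵥ y ≠ c • y) :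
    ⨅ j, (A *ᵥ y) j / y j < (A *ᵥ (A *ᵥ y)) i / (A *ᵥ y) i := by
  set c := ⨅ j, (A *ᵥ y) j / y j
  have hle : c • y ≤ A *ᵥ y := fun j => (le_div_iff₀ (hy j)).mp
    (ciInf_le (f := fun j => (A *ᵥ y) j / y j) (Finite.bddBelow_range _) j)
  rw [lt_div_iff₀ (mulVec_apply_pos hrow hy), ← smul_eq_mul, ← Pi.smul_apply, ← mulVec_smul]
  exact mulVec_apply_lt_mulVec_apply hrow (lt_of_le_of_ne hle (hne c).symm)

end Matrix

section

variable {n : ℕ} {A : Matrix (Fin n) (Fin n) ℝ}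

lemma perronValue_eq_of_mulVec_eq_smul [NeZero n] (hA : ∀ i j, 0 ≤ A i j) {v : Fin n → ℝ}
    (hv : ∀ i, 0 < v i) {t : ℝ} (hAv : A *ᵥ v = t • v) : perronValue A = t := by
  have hv0 : (fun i => (v i : ℂ)) ≠ 0 := fun h => (hv 0).ne' (by simpa using congrFun h 0)
  have hroot : (A.map Complex.ofReal).charpoly.IsRoot (t : ℂ) := by
    refine (isRoot_charpoly_iff_exists_mulVec_eq_smul _ _).mpr ⟨_, hv0, ?_⟩
    have := congrArg (fun u : Fin n → ℝ => fun i => (u i : ℂ)) hAv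
    simpa [funext_iff, mulVec, dotProduct] using this
  set S := {r : ℝ | ∃ μ : ℂ, (A.map Complex.ofReal).charpoly.IsRoot μ ∧ r = ‖μ‖}
  have hub : ∀ r ∈ S, r ≤ t := by
    rintro r ⟨μ, hμ, rfl⟩
    obtain ⟨w, hw0, hAw⟩ := (isRoot_charpoly_iff_exists_mulVec_eq_smul _ _).mp hμ
    exact norm_le_of_mulVec_eq_smul hA hv hAv hw0 hAw
  have hmem : ‖(t : ℂ)‖ ∈ S := ⟨t, hroot, rfl⟩
  have ht : ‖(t : ℂ)‖ = t :=
    le_antisymm (hub _ hmem) (by rw [Complex.norm_real]; exact Real.le_norm_self t)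
  exact le_antisymm (csSup_le ⟨_, hmem⟩ hub) (ht ▸ le_csSup ⟨t, hub⟩ hmem)

lemma isPerronVector_of_mulVec_eq_smul [NeZero n] (hA : ∀ i j, 0 ≤ A i j) {v : Fin n → ℝ}
    (hv : ∀ i, 0 < v i) {t : ℝ} (hAv : A *ᵥ v = t • v) : IsPerronVector A v :=
  ⟨fun h => (hv 0).ne' (congrFun h 0), by rw [perronValue_eq_of_mulVec_eq_smul hA hv hAv, hAv]⟩

lemma IsIrreducibleMatrix.exists_ne_zero (hn : 2 ≤ n) (hirr : IsIrreducibleMatrix A) (i : Fin n) :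
    ∃ j, A i j ≠ 0 := by
  have hS : ({i} : Finset (Fin n)) ≠ Finset.univ := fun h => by
    have := congrArg Finset.card h
    simp only [Finset.card_singleton, Finset.card_univ, Fintype.card_fin] at this
    omega
  obtain ⟨i', hi', j, -, hj⟩ := hirr {i} (Finset.singleton_nonempty i) hS
  exact ⟨j, Finset.mem_singleton.mp hi' ▸ hj⟩

variable {x : Fin n → ℝ}

lemma aSeq_succ (k : ℕ) : aSeq A x (k + 1) = ⨆ j, (A *ᵥ (A ^ k *ᵥ x)) j / (A ^ k *ᵥ x) j := by
  simp only [aSeq, Nat.add_sub_cancel, pow_succ_mulVec]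

lemma bSeq_succ (k : ℕ) : bSeq A x (k + 1) = ⨅ j, (A *ᵥ (A ^ k *ᵥ x)) j / (A ^ k *ᵥ x) j := by
  simp only [bSeq, Nat.add_sub_cancel, pow_succ_mulVec]

lemma IsLogConcavityIndex.eventually_aSeq_succ_lt {i₀ : Fin n} (h : IsLogConcavityIndex A x i₀)
    (hpos : ∀ k i, 0 < (A ^ k *ᵥ x) i) (hrow : ∀ j, 0 < A i₀ j)
    (hne : ∀ (k : ℕ) (c : ℝ), A *ᵥ (A ^ k *ᵥ x) ≠ c • A ^ k *ᵥ x) :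
    ∃ k₁ : ℕ, 1 ≤ k₁ ∧
      (∀ k : ℕ, k₁ ≤ k → aSeq A x (k + 1) < aSeq A x k) ∧
      (∀ k : ℕ, k₁ ≤ k →
        (A ^ (k - 1)).mulVec x i₀ * (A ^ (k + 1)).mulVec x i₀ < ((A ^ k).mulVec x i₀) ^ 2) := by
  obtain ⟨K, hK, hmax⟩ := h
  have hratio : ∀ m, K ≤ m + 1 → aSeq A x (m + 1) = (A ^ (m + 1) *ᵥ x) i₀ / (A ^ m *ᵥ x) i₀ :=
    fun m hm => (hmax (m + 1) hm).symm
  have hdec : ∀ m, K ≤ m + 1 → aSeq A x (m + 1 + 1) < aSeq A x (m + 1) := fun m hm => by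
    rw [hratio (m + 1) (by omega), aSeq_succ, pow_succ_mulVec A (m + 1), pow_succ_mulVec A m]
    exact mulVec_apply_div_lt_iSup hrow (hpos m) (hne m)
  refine ⟨K, hK, fun k hk => ?_, fun k hk => ?_⟩ <;>
    obtain ⟨m, rfl⟩ : ∃ m, k = m + 1 := ⟨k - 1, by omega⟩
  · exact hdec m hk
  · have h := hdec m hk
    rw [hratio (m + 1) (by omega), hratio m hk, div_lt_div_iff₀ (hpos _ i₀) (hpos _ i₀)] at h
    simpa [sq, mul_comm] using h

lemma IsLogConvexityIndex.eventually_bSeq_lt_succ {i₀ : Fin n} (h : IsLogConvexityIndex A x i₀)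
    (hpos : ∀ k i, 0 < (A ^ k *ᵥ x) i) (hrow : ∀ j, 0 < A i₀ j)
    (hne : ∀ (k : ℕ) (c : ℝ), A *ᵥ (A ^ k *ᵥ x) ≠ c • A ^ k *ᵥ x) :
    ∃ k₂ : ℕ, 1 ≤ k₂ ∧
      (∀ k : ℕ, k₂ ≤ k → bSeq A x k < bSeq A x (k + 1)) ∧
      (∀ k : ℕ, k₂ ≤ k →
        ((A ^ k).mulVec x i₀) ^ 2 < (A ^ (k - 1)).mulVec x i₀ * (A ^ (k + 1)).mulVec x i₀) := by
  obtain ⟨K, hK, hmin⟩ := h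
  have hratio : ∀ m, K ≤ m + 1 → bSeq A x (m + 1) = (A ^ (m + 1) *ᵥ x) i₀ / (A ^ m *ᵥ x) i₀ :=
    fun m hm => (hmin (m + 1) hm).symm
  have hinc : ∀ m, K ≤ m + 1 → bSeq A x (m + 1) < bSeq A x (m + 1 + 1) := fun m hm => by
    rw [hratio (m + 1) (by omega), bSeq_succ, pow_succ_mulVec A (m + 1), pow_succ_mulVec A m]
    exact iInf_lt_mulVec_apply_div hrow (hpos m) (hne m)
  refine ⟨K, hK, fun k hk => ?_, fun k hk => ?_⟩ <;>
    obtain ⟨m, rfl⟩ : ∃ m, k = m + 1 := ⟨k - 1, by omega⟩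
  · exact hinc m hk
  · have h := hinc m hk
    rw [hratio (m + 1) (by omega), hratio m hk, div_lt_div_iff₀ (hpos _ i₀) (hpos _ i₀)] at h
    simpa [sq, mul_comm] using h

end

theorem strict_monotone_and_strict_log_behaviour_general {n : ℕ} (hn : 2 ≤ n)
    (A : Matrix (Fin n) (Fin n) ℝ) (x : Fin n → ℝ)
    (hirr : IsIrreducibleMatrix A) (hnonneg : ∀ i j, 0 ≤ A i j)
    (hx : ∀ i, 0 < x i)
    (i₁ i₂ : Fin n) (h₁ : IsLogConcavityIndex A x i₁) (h₂ : IsLogConvexityIndex A x i₂)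
    (hrow₁ : ∀ j, 0 < A i₁ j) (hrow₂ : ∀ j, 0 < A i₂ j)
    (hnp : ∀ r : ℕ, ¬ IsPerronVector A ((A ^ r).mulVec x)) :
    (∃ k₁ : ℕ, 1 ≤ k₁ ∧
      (∀ k : ℕ, k₁ ≤ k → aSeq A x (k + 1) < aSeq A x k) ∧
      (∀ k : ℕ, k₁ ≤ k →
        (A ^ (k - 1)).mulVec x i₁ * (A ^ (k + 1)).mulVec x i₁ < ((A ^ k).mulVec x i₁) ^ 2)) ∧
    (∃ k₂ : ℕ, 1 ≤ k₂ ∧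
      (∀ k : ℕ, k₂ ≤ k → bSeq A x k < bSeq A x (k + 1)) ∧
      (∀ k : ℕ, k₂ ≤ k →
        ((A ^ k).mulVec x i₂) ^ 2 < (A ^ (k - 1)).mulVec x i₂ * (A ^ (k + 1)).mulVec x i₂)) := by
  have : NeZero n := ⟨by omega⟩
  have hpos := pow_mulVec_pos_of_exists_ne_zero hnonneg (hirr.exists_ne_zero hn) hx
  have hne : ∀ (k : ℕ) (c : ℝ), A *ᵥ (A ^ k *ᵥ x) ≠ c • A ^ k *ᵥ x := fun k c h =>
    hnp k (isPerronVector_of_mulVec_eq_smul hnonneg (hpos k) h)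
  exact ⟨h₁.eventually_aSeq_succ_lt hpos hrow₁ hne, h₂.eventually_bSeq_lt_succ hpos hrow₂ hne⟩

/-- Let `A` be `n × n` (`n ≥ 2`) irreducible, entrywise nonnegative,
symmetric positive semidefinite, `x` entrywise positive, `i₁` a log-concavity index and `i₂`
a log-convexity index of `A` associated with `x`; set `g k = (A^k x)_{i₁}`,
`h k = (A^k x)_{i₂}`. Assume rows `i₁` and `i₂` of `A` are entrywise positive and `A^r x`
is not a Perron vector for any `r ≥ 0`. Then:
(i) there is `k₁ ≥ 1` such that `(a_k(A,x))_{k ≥ k₁}` is strictly decreasing and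
`g (k-1) * g (k+1) < (g k)²` for all `k ≥ k₁`;
(ii) there is `k₂ ≥ 1` such that `(b_k(A,x))_{k ≥ k₂}` is strictly increasing and
`(h k)² < h (k-1) * h (k+1)` for all `k ≥ k₂`. -/
theorem strict_monotone_and_strict_log_behaviour {n : ℕ} (hn : 2 ≤ n)
    (A : Matrix (Fin n) (Fin n) ℝ) (x : Fin n → ℝ)
    (hirr : IsIrreducibleMatrix A) (hnonneg : ∀ i j, 0 ≤ A i j)
    (hpsd : A.PosSemidef) (hx : ∀ i, 0 < x i)
    (i₁ i₂ : Fin n) (h₁ : IsLogConcavityIndex A x i₁) (h₂ : IsLogConvexityIndex A x i₂)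
    (hrow₁ : ∀ j, 0 < A i₁ j) (hrow₂ : ∀ j, 0 < A i₂ j)
    (hnp : ∀ r : ℕ, ¬ IsPerronVector A ((A ^ r).mulVec x)) :
    (∃ k₁ : ℕ, 1 ≤ k₁ ∧
      (∀ k : ℕ, k₁ ≤ k → aSeq A x (k + 1) < aSeq A x k) ∧
      (∀ k : ℕ, k₁ ≤ k →
        (A ^ (k - 1)).mulVec x i₁ * (A ^ (k + 1)).mulVec x i₁ < ((A ^ k).mulVec x i₁) ^ 2)) ∧
    (∃ k₂ : ℕ, 1 ≤ k₂ ∧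
      (∀ k : ℕ, k₂ ≤ k → bSeq A x k < bSeq A x (k + 1)) ∧
      (∀ k : ℕ, k₂ ≤ k →
        ((A ^ k).mulVec x i₂) ^ 2 < (A ^ (k - 1)).mulVec x i₂ * (A ^ (k + 1)).mulVec x i₂)) :=
  strict_monotone_and_strict_log_behaviour_general hn A x hirr hnonneg hx i₁ i₂ h₁ h₂ hrow₁ hrow₂
    hnp
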